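/- Let 𝔠⁺ denote the cardinal successor of the cardinality of the continuum, identified with the set of ordinals below it, and let X = (𝔠⁺ × ℤ) ∪ {∞} where ∞ ∉ 𝔠⁺ × ℤ. Topologize X by declaring as a subbase all sets S_{α,n} = {(β,k) : α ≤ β and n ≤ k} for (α,n) ∈ 𝔠⁺ × ℤ and all sets T_α = {(β,k) : α ≤ β, k ∈ ℤ} ∪ {∞} for α ∈ 𝔠⁺. Then X is injectively core compact. -/

import Mathlib

open TopologicalSpace

/-- The adherence of a filter: its set of cluster points. -/
def adh {Y : Type*} [TopologicalSpace Y] (F : Filter Y) : Set Y :=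
  {y | ClusterPt y F}

/-- The infimum (in the order where a filter is smaller when it is coarser, i.e. has
fewer sets) of a family of filters: the coarsest filter contained in every member,
whose elements are exactly the sets belonging to all members, equivalently the sets
`⋃ᵢ Hᵢ` with `Hᵢ ∈ ℋᵢ`.  In Mathlib's order on filters this is the supremum. -/
def filterInfimum {Y : Type*} (H : Set (Filter Y)) : Filter Y :=
  sSup H

/-- A topological space is *injectively core compact* if for every `x`, every open
`U ∋ x` and every family `ℍ` of filters admitting an injection `θ` of `ℍ` into the
open supersets of `U` with `adh ℋ ∩ θ ℋ = ∅` for all `ℋ ∈ ℍ`, the point `x` is not a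
cluster point of the infimum filter `⋀_{ℋ ∈ ℍ} ℋ`. -/
def InjCoreCompact (Y : Type*) [TopologicalSpace Y] : Prop :=
  ∀ (x : Y) (U : Set Y), IsOpen U → x ∈ U →
    ∀ (H : Set (Filter Y)) (θ : Filter Y → Set Y),
      (∀ F ∈ H, IsOpen (θ F) ∧ U ⊆ θ F) →
      Set.InjOn θ H →
      (∀ F ∈ H, adh F ∩ θ F = ∅) →
      x ∉ adh (filterInfimum H)

/-- The set of ordinals below `𝔠⁺`, the cardinal successor of the continuum. -/
abbrev CPlus : Type 1 := ↥(Set.Iio ((Order.succ Cardinal.continuum).ord))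

/-- The underlying set `X = (𝔠⁺ × ℤ) ∪ {∞}`, with `none` playing the role of `∞`. -/
abbrev JSpace : Type 1 := Option (CPlus × ℤ)

/-- The subbasic open set `S_{α,n} = {(β,k) : α ≤ β and n ≤ k}`. -/
def Ssub (α : CPlus) (n : ℤ) : Set JSpace :=
  {x | ∃ (β : CPlus) (k : ℤ), x = some (β, k) ∧ (α : Ordinal) ≤ (β : Ordinal) ∧ n ≤ k}

/-- The subbasic open set `T_α = {(β,k) : α ≤ β, k ∈ ℤ} ∪ {∞}`. -/
def Tsub (α : CPlus) : Set JSpace :=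
  {x | x = none ∨ ∃ (β : CPlus) (k : ℤ), x = some (β, k) ∧ (α : Ordinal) ≤ (β : Ordinal)}

/-- The topology on `X` generated by the subbase of all the sets `S_{α,n}` and `T_α`. -/
def jTop : TopologicalSpace JSpace :=
  TopologicalSpace.generateFrom
    ((Set.range fun p : CPlus × ℤ => Ssub p.1 p.2) ∪ Set.range Tsub)

/-!
A point `(β, k)` has a smallest neighbourhood `S_{β,k}`, so a filter not clustering at it
contains the complement of `S_{β,k}`, and then so does the infimum of any family of such filters.

At `∞` the sets `T_α` form a neighbourhood base, so each `ℋ ∈ ℍ` contains the complement of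
some `T_{a ℋ}`. An open set containing `T_γ` is determined by the least ordinal of each of its
levels, a function `ℤ → [0, γ]`, so there are at most `𝔠 ^ ℵ₀ = 𝔠` such sets. Through the
injection `θ`, `ℍ` has at most `𝔠` members, and as `𝔠⁺` is regular the ordinals `a ℋ` are
bounded by some `δ < 𝔠⁺`. The complement of the neighbourhood `T_δ` of `∞` then lies in every
`ℋ ∈ ℍ`.
-/

open Filter Topology Cardinal Set

theorem notMem_adh_filterInfimum_of_disjoint_principal {Y : Type*} [TopologicalSpace Y]
    {x : Y} {s : Set Y} {H : Set (Filter Y)} (hs : s ∈ 𝓝 x)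
    (hH : ∀ F ∈ H, Disjoint (𝓟 s) F) : x ∉ adh (filterInfimum H) := by
  have hsH : Disjoint (𝓟 s) (filterInfimum H) :=
    disjoint_principal_left.2 (mem_sSup.2 fun F hF => disjoint_principal_left.1 (hH F hF))
  exact fun hx => clusterPt_iff_not_disjoint.1 hx (hsH.mono_left (le_principal_iff.2 hs))

namespace CPlus

theorem card_succ_le_continuum (γ : CPlus) : (Order.succ (γ : Ordinal)).card ≤ 𝔠 :=
  Order.lt_succ_iff.1 <| lt_ord.1 <|
    (isSuccLimit_ord (aleph0_le_continuum.trans (Order.le_succ _))).succ_lt γ.2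

theorem cof_eq : Order.cof CPlus = Order.succ 𝔠 := by
  rw [Ordinal.cof_Iio, lift_ord, lift_succ, lift_continuum,
    (isRegular_succ aleph0_le_continuum).cof_ord]

theorem exists_forall_lt_of_mk_le_continuum {s : Set CPlus} (hs : #s ≤ 𝔠) :
    ∃ δ, ∀ α ∈ s, α < δ :=
  not_isCofinal_iff.1 fun hcof =>
    ((Order.cof_le hcof).trans hs).not_gt (cof_eq ▸ Order.lt_succ 𝔠)

theorem mk_Iic_le_continuum (γ : CPlus) : #(Iic (γ : Ordinal)) ≤ 𝔠 := by
  rw [← Order.Iio_succ, mk_Iio_ordinal, lift_le_continuum]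
  exact card_succ_le_continuum γ

end CPlus

local instance : TopologicalSpace JSpace := jTop

namespace JSpace

theorem mem_Ssub {α : CPlus} {n : ℤ} {p : CPlus × ℤ} : some p ∈ Ssub α n ↔ (α, n) ≤ p := by
  refine ⟨?_, fun h => ⟨p.1, p.2, rfl, h⟩⟩
  rintro ⟨β, k, hp, h⟩
  obtain rfl := Option.some_injective _ hp
  exact h

theorem mem_Tsub {α : CPlus} {p : CPlus × ℤ} : some p ∈ Tsub α ↔ α ≤ p.1 := by
  refine ⟨?_, fun h => Or.inr ⟨p.1, p.2, rfl, h⟩⟩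
  rintro (hp | ⟨β, k, hp, h⟩)
  · cases hp
  · obtain rfl := Option.some_injective _ hp
    exact h

theorem none_mem_Tsub (α : CPlus) : none ∈ Tsub α := Or.inl rfl

theorem none_notMem_Ssub (α : CPlus) (n : ℤ) : none ∉ Ssub α n := by
  rintro ⟨β, k, h, -⟩
  cases h

theorem Tsub_anti : Antitone Tsub := by
  rintro α α' h x (rfl | ⟨β, k, rfl, hβ⟩)
  · exact none_mem_Tsub α
  · exact Or.inr ⟨β, k, rfl, h.trans hβ⟩

theorem isOpen_Ssub (α : CPlus) (n : ℤ) : IsOpen (Ssub α n) :=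
  GenerateOpen.basic _ (Or.inl ⟨(α, n), rfl⟩)

theorem isOpen_Tsub (α : CPlus) : IsOpen (Tsub α) :=
  GenerateOpen.basic _ (Or.inr ⟨α, rfl⟩)

theorem isUpperSet_preimage_some {W : Set JSpace} (hW : IsOpen W) : IsUpperSet (some ⁻¹' W) := by
  induction hW with
  | basic s hs =>
    rcases hs with ⟨⟨α, n⟩, rfl⟩ | ⟨α, rfl⟩
    · exact fun p q hpq hp => mem_Ssub.2 ((mem_Ssub.1 hp).trans hpq)
    · exact fun p q hpq hp => mem_Tsub.2 ((mem_Tsub.1 hp).trans hpq.1)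
  | univ => exact isUpperSet_univ
  | inter s t _ _ hs ht => exact hs.inter ht
  | sUnion S _ hS =>
    rintro p q hpq ⟨s, hsS, hp⟩
    exact ⟨s, hsS, hS s hsS hpq hp⟩

theorem nhds_some (p : CPlus × ℤ) : 𝓝 (some p) = 𝓟 (Ssub p.1 p.2) := by
  refine le_antisymm (le_principal_iff.2 ((isOpen_Ssub _ _).mem_nhds (mem_Ssub.2 le_rfl))) ?_
  refine (nhds_basis_opens _).ge_iff.2 fun O ⟨hpO, hO⟩ => ?_
  rintro _ ⟨β, k, rfl, hpq⟩
  exact isUpperSet_preimage_some hO hpq hpO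

theorem exists_Tsub_subset {W : Set JSpace} (hW : IsOpen W) (h : none ∈ W) :
    ∃ γ, Tsub γ ⊆ W := by
  induction hW with
  | basic s hs =>
    rcases hs with ⟨⟨α, n⟩, rfl⟩ | ⟨α, rfl⟩
    · exact absurd h (none_notMem_Ssub α n)
    · exact ⟨α, subset_rfl⟩
  | univ => exact ⟨⟨0, by simp⟩, subset_univ _⟩
  | inter s t _ _ hs ht =>
    obtain ⟨γ₁, h₁⟩ := hs h.1
    obtain ⟨γ₂, h₂⟩ := ht h.2
    exact ⟨max γ₁ γ₂, subset_inter ((Tsub_anti (le_max_left _ _)).trans h₁)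
      ((Tsub_anti (le_max_right _ _)).trans h₂)⟩
  | sUnion S _ hS =>
    obtain ⟨s, hsS, hs⟩ := h
    obtain ⟨γ, hγ⟩ := hS s hsS hs
    exact ⟨γ, hγ.trans (subset_sUnion_of_mem hsS)⟩

theorem hasBasis_nhds_none : (𝓝 (none : JSpace)).HasBasis (fun _ => True) Tsub := by
  refine ⟨fun t => ⟨fun ht => ?_, fun ⟨γ, _, hγ⟩ =>
    mem_of_superset ((isOpen_Tsub γ).mem_nhds (none_mem_Tsub γ)) hγ⟩⟩
  obtain ⟨O, hOt, hO, hO'⟩ := mem_nhds_iff.1 ht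
  obtain ⟨γ, hγ⟩ := exists_Tsub_subset hO hO'
  exact ⟨γ, trivial, hγ.trans hOt⟩

noncomputable def levelMin (W : Set JSpace) (k : ℤ) : Ordinal :=
  sInf (Subtype.val '' {β : CPlus | some (β, k) ∈ W})

theorem levelMin_le_iff {W : Set JSpace} (hW : IsOpen W) {γ : CPlus} (hγ : Tsub γ ⊆ W)
    (β : CPlus) (k : ℤ) : levelMin W k ≤ β ↔ some (β, k) ∈ W := by
  refine ⟨fun h => ?_, fun h => csInf_le' (mem_image_of_mem _ h)⟩
  obtain ⟨β₀, hβ₀, hβ₀W⟩ : levelMin W k ∈ Subtype.val '' {β : CPlus | some (β, k) ∈ W} :=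
    csInf_mem ⟨γ, γ, hγ (mem_Tsub.2 le_rfl), rfl⟩
  exact isUpperSet_preimage_some hW (a := (β₀, k)) ⟨hβ₀W.trans_le h, le_rfl⟩ hβ₀

theorem levelMin_le {W : Set JSpace} {γ : CPlus} (hγ : Tsub γ ⊆ W) (k : ℤ) :
    levelMin W k ≤ γ :=
  csInf_le' ⟨γ, hγ (mem_Tsub.2 le_rfl), rfl⟩

theorem eq_of_levelMin_eq {W W' : Set JSpace} (hW : IsOpen W) (hW' : IsOpen W') {γ : CPlus}
    (hγ : Tsub γ ⊆ W) (hγ' : Tsub γ ⊆ W') (h : levelMin W = levelMin W') : W = W' := by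
  ext (_ | ⟨β, k⟩)
  · exact iff_of_true (hγ (none_mem_Tsub γ)) (hγ' (none_mem_Tsub γ))
  · rw [← levelMin_le_iff hW hγ, ← levelMin_le_iff hW' hγ', h]

theorem mk_isOpen_Tsub_subset_le_continuum (γ : CPlus) :
    #{W : Set JSpace | IsOpen W ∧ Tsub γ ⊆ W} ≤ 𝔠 := by
  let levels (W : {W : Set JSpace | IsOpen W ∧ Tsub γ ⊆ W}) (k : ℤ) : Iic (γ : Ordinal) :=
    ⟨levelMin W k, levelMin_le W.2.2 k⟩
  have hinj : Function.Injective levels := fun W W' h =>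
    Subtype.ext <| eq_of_levelMin_eq W.2.1 W'.2.1 W.2.2 W'.2.2 <|
      funext fun k => congrArg Subtype.val (congrFun h k)
  calc #{W : Set JSpace | IsOpen W ∧ Tsub γ ⊆ W}
      ≤ #(ℤ → Iic (γ : Ordinal)) := mk_le_of_injective hinj
    _ = #(Iic (γ : Ordinal)) ^ ℵ₀ := by rw [mk_arrow, lift_uzero, mk_int, lift_aleph0]
    _ ≤ 𝔠 ^ ℵ₀ := power_le_power_right (CPlus.mk_Iic_le_continuum γ)
    _ = 𝔠 := continuum_power_aleph0

end JSpace

open JSpace CPlus in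
/-- The space `X = (𝔠⁺ × ℤ) ∪ {∞}` with the topology generated by the sets `S_{α,n}`
and `T_α` is injectively core compact. -/
theorem jSpace_injCoreCompact : @InjCoreCompact JSpace jTop := by
  intro x U hU hxU H θ hθ hθinj hadh
  have hdisj : ∀ F ∈ H, Disjoint (𝓝 x) F := fun F hF =>
    not_not.1 fun h => (hadh F hF).subset ⟨clusterPt_iff_not_disjoint.2 h, (hθ F hF).2 hxU⟩
  cases x with
  | some p =>
    exact notMem_adh_filterInfimum_of_disjoint_principal (nhds_some p ▸ mem_principal_self _)
      fun F hF => nhds_some p ▸ hdisj F hF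
  | none =>
    obtain ⟨γ, hγU⟩ := exists_Tsub_subset hU hxU
    have hH : #H ≤ 𝔠 := calc
      #H = #(θ '' H) := (mk_image_eq_of_injOn θ H hθinj).symm
      _ ≤ #{W : Set JSpace | IsOpen W ∧ Tsub γ ⊆ W} :=
        mk_le_mk_of_subset (image_subset_iff.2 fun F hF => ⟨(hθ F hF).1, hγU.trans (hθ F hF).2⟩)
      _ ≤ 𝔠 := mk_isOpen_Tsub_subset_le_continuum γ
    choose a ha using fun F : H => hasBasis_nhds_none.disjoint_iff_left.1 (hdisj F F.2)
    obtain ⟨δ, hδ⟩ := exists_forall_lt_of_mk_le_continuum (mk_range_le.trans hH)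
    refine notMem_adh_filterInfimum_of_disjoint_principal
      ((isOpen_Tsub δ).mem_nhds (none_mem_Tsub δ)) fun F hF => disjoint_principal_left.2 ?_
    exact mem_of_superset (ha ⟨F, hF⟩).2
      (compl_subset_compl.2 (Tsub_anti (hδ _ (mem_range_self ⟨F, hF⟩)).le))
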